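/- The map F ↦ M(F) is a bijection from the set ℱ(X,Ω) of decorated planar rooted forests onto the set FM(X,Ω) of forest-representable matrices. -/

import Mathlib

open scoped TensorProduct

universe u v w u'

/-- Decorated planar rooted trees: internal vertices are decorated by `Ω`,
leaves are decorated by `X ⊔ Ω` (a leaf decorated by `ω : Ω` is `node ω []`). -/
inductive PTree (X : Type u) (Ω : Type v) : Type (max u v)
  | leafX : X → PTree X Ω
  | node : Ω → List (PTree X Ω) → PTree X Ω

namespace Moerdijk

variable {X : Type u} {Ω : Type v}

/-- `ℱ(X,Ω)`: decorated planar rooted forests, i.e. the free monoid on decorated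
planar rooted trees under concatenation. -/
abbrev RForest (X : Type u) (Ω : Type v) := FreeMonoid (PTree X Ω)

/-- The single-vertex forest `•ₓ` for `x ∈ X`. -/
def leafF (x : X) : RForest X Ω := FreeMonoid.of (PTree.leafX x)

/-- Grafting of a forest onto a new common root decorated by `ω`. -/
def graft (ω : Ω) (F : RForest X Ω) : RForest X Ω :=
  FreeMonoid.of (PTree.node ω (FreeMonoid.toList F))

mutual
  /-- The list of subtrees of a tree, rooted at its vertices taken in the total
  order `≤_{h,r}` (preorder: roots first, then subtrees from left to right). -/
  def subT : PTree X Ω → List (PTree X Ω)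
    | .leafX x => [.leafX x]
    | .node ω ts => .node ω ts :: subF ts
  /-- The list of subtrees of a forest, rooted at its vertices in the order `≤_{h,r}`. -/
  def subF : List (PTree X Ω) → List (PTree X Ω)
    | [] => []
    | t :: ts => subT t ++ subF ts
end

/-- The vertices of a forest `F`, listed in the total order `≤_{h,r}`, each vertex
being recorded by the subtree it roots. -/
def vlist (F : RForest X Ω) : List (PTree X Ω) := subF (FreeMonoid.toList F)

/-- The number of vertices of a forest. -/
def numV (F : RForest X Ω) : ℕ := (vlist F).length

/-- The decoration of the root of a tree. -/
def rootDec : PTree X Ω → X ⊕ Ω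
  | .leafX x => Sum.inl x
  | .node ω _ => Sum.inr ω

/-- The decoration of the `i`-th vertex (in the order `≤_{h,r}`) of a forest. -/
def decorV (F : RForest X Ω) (i : Fin (numV F)) : X ⊕ Ω := rootDec ((vlist F).get i)

/-- The number of vertices of the subtree rooted at the `i`-th vertex of `F`. -/
def subSize (F : RForest X Ω) (i : Fin (numV F)) : ℕ := (subT ((vlist F).get i)).length

/-- The order `≤_h` on `V(F)`: `i ≤_h j` iff there is an oriented path from `i` to `j`,
edges being oriented from the roots towards the leaves.  In the preorder indexing, the
descendants of `i` are exactly the indices in `[i, i + subSize F i)`. -/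
def leh (F : RForest X Ω) (i j : Fin (numV F)) : Prop :=
  (i : ℕ) ≤ (j : ℕ) ∧ (j : ℕ) < (i : ℕ) + subSize F i

/-- The (reflexive) relation `≤_r` on `V(F)`: `i ≤_r j` iff `i = j`, or `i` and `j` are
not comparable for `≤_h` and `j` lies more to the right than `i` in the planar
representation of `F`. -/
def ler (F : RForest X Ω) (i j : Fin (numV F)) : Prop :=
  i = j ∨ (¬ leh F i j ∧ ¬ leh F j i ∧ i < j)

instance (F : RForest X Ω) (i j : Fin (numV F)) : Decidable (leh F i j) := by
  unfold leh; infer_instance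

/-- The set `V_X(F)` of vertices of `F` decorated by an element of `X`. -/
def VXset (F : RForest X Ω) : Finset (Fin (numV F)) :=
  Finset.univ.filter fun i => (decorV F i).isLeft

mutual
  /-- Restriction of a tree, whose vertices have preorder indices `off, off + 1, …`,
  to the set of vertices selected by `p`: each kept vertex receives an incoming edge
  from its smallest kept ancestor, if any; otherwise it becomes a root. -/
  def restT (p : ℕ → Bool) : PTree X Ω → ℕ → List (PTree X Ω)
    | .leafX x, off => if p off then [.leafX x] else []
    | .node ω ts, off =>
        if p off then [.node ω (restF p ts (off + 1))] else restF p ts (off + 1)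
  /-- Restriction of a forest to the set of vertices selected by `p`. -/
  def restF (p : ℕ → Bool) : List (PTree X Ω) → ℕ → List (PTree X Ω)
    | [], _ => []
    | t :: ts, off => restT p t off ++ restF p ts (off + (subT t).length)
end

/-- The induced subforest `F_I` of a forest `F` on a subset `I ⊆ V(F)`. -/
def indSub (F : RForest X Ω) (I : Finset (Fin (numV F))) : RForest X Ω :=
  FreeMonoid.ofList
    (restF (fun m => decide (∃ i ∈ I, (i : ℕ) = m)) (FreeMonoid.toList F) 0)

/-- The possible entries of the matrix of a forest: `0`, `=`, `h` and `r`. -/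
inductive MEntry : Type
  | zero | eq | h | r
deriving DecidableEq

/-- A matrix with `n` rows (indexed `1,…,n`) and `n + 1` columns (indexed `0,…,n`):
the column `0` has entries in `X ⊔ Ω` and the other entries are among `0, =, h, r`. -/
structure FMat (X : Type u) (Ω : Type v) : Type (max u v) where
  n : ℕ
  dec : Fin n → X ⊕ Ω
  rel : Fin n → Fin n → MEntry

/-- Forest-representable matrices, conditions (a)–(f). -/
def IsFR (A : FMat X Ω) : Prop :=
  (∀ i j : Fin A.n, j < i → A.rel i j = .zero) ∧
  (∀ i : Fin A.n, A.rel i i = .eq) ∧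
  (∀ i j : Fin A.n, i < j → A.rel i j = .h ∨ A.rel i j = .r) ∧
  (∀ i j : Fin A.n, i < j → (A.dec i).isLeft → A.rel i j = .r) ∧
  (∀ i j l : Fin A.n, i < j → j < l →
    (A.rel i j, A.rel i l, A.rel j l) ∈
      ([(.r, .r, .r), (.h, .h, .h), (.r, .r, .h), (.h, .h, .r), (.h, .r, .r)] :
        List (MEntry × MEntry × MEntry)))

/-- The matrix `M(F)` of a decorated planar rooted forest `F`. -/
def Mmat (F : RForest X Ω) : FMat X Ω where
  n := numV F
  dec := decorV F
  rel := fun i j =>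
    if i < j then (if leh F i j then .h else .r)
    else if i = j then .eq else .zero

/-!
In the order `≤_{h,r}` (preorder) the `≤_h`-descendants of the `i`-th vertex are the vertices
`i, …, i + sᵢ - 1`, where `sᵢ` is the size of the subtree rooted there; so row `i` of `M(F)` is
`h` before position `i + sᵢ` and `r` from there on. Hence `M(F)` carries exactly the preorder
code of `F`, the list of pairs (decoration, subtree size), and a matrix gives back such a code
by reading off the first `r` of each row. Condition (f) says that these first `r`s cut out
nested intervals `[i, i + sᵢ)`, and lists of positive sizes with nested intervals (and size `1`
at the vertices decorated by `X`) are exactly the codes of forests: the first tree of the forest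
is the block of length `s₀`, and a forest is recovered from its code block by block.
-/

def preorderCode (l : List (PTree X Ω)) : List ((X ⊕ Ω) × ℕ) :=
  (subF l).map fun t => (rootDec t, (subT t).length)

@[simp] theorem preorderCode_nil : preorderCode ([] : List (PTree X Ω)) = [] := by
  simp [preorderCode, subF]

@[simp] theorem preorderCode_leafX_cons (x : X) (ts : List (PTree X Ω)) :
    preorderCode (.leafX x :: ts) = (.inl x, 1) :: preorderCode ts := by
  simp [preorderCode, subF, subT, rootDec]

@[simp] theorem preorderCode_node_cons (ω : Ω) (us ts : List (PTree X Ω)) :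
    preorderCode (.node ω us :: ts) =
      (.inr ω, (preorderCode us).length + 1) :: (preorderCode us ++ preorderCode ts) := by
  simp [preorderCode, subF, subT, rootDec]

theorem preorderCode_injective : Function.Injective (preorderCode (X := X) (Ω := Ω))
  | [], [], _ => rfl
  | .leafX x :: ts, .leafX x' :: ts', h => by
    simp only [preorderCode_leafX_cons, List.cons.injEq, Prod.mk.injEq, Sum.inl.injEq] at h
    rw [h.1.1, preorderCode_injective h.2]
  | .node ω us :: ts, .node ω' us' :: ts', h => by
    simp only [preorderCode_node_cons, List.cons.injEq, Prod.mk.injEq, Sum.inr.injEq,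
      Nat.add_right_cancel_iff] at h
    obtain ⟨⟨rfl, hlen⟩, happ⟩ := h
    obtain ⟨hus, hts⟩ := List.append_inj happ hlen
    rw [preorderCode_injective hus, preorderCode_injective hts]
  | [], .leafX _ :: _, h | [], .node _ _ :: _, h | .leafX _ :: _, [], h
  | .node _ _ :: _, [], h | .leafX _ :: _, .node _ _ :: _, h
  | .node _ _ :: _, .leafX _ :: _, h => by simp at h

structure IsForestCode (l : List ((X ⊕ Ω) × ℕ)) : Prop where
  size_pos : ∀ i (hi : i < l.length), 0 < l[i].2
  add_size_le : ∀ i (hi : i < l.length), i + l[i].2 ≤ l.length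
  nested : ∀ i j (hi : i < l.length) (hj : j < l.length), i ≤ j → j < i + l[i].2 →
    j + l[j].2 ≤ i + l[i].2
  size_eq_one : ∀ i (hi : i < l.length), l[i].1.isLeft → l[i].2 = 1

namespace IsForestCode

theorem nil : IsForestCode ([] : List ((X ⊕ Ω) × ℕ)) :=
  ⟨nofun, nofun, nofun, nofun⟩

theorem append {a b : List ((X ⊕ Ω) × ℕ)} (ha : IsForestCode a) (hb : IsForestCode b) :
    IsForestCode (a ++ b) := by
  constructor
  · intro i hi
    rw [List.getElem_append]
    split_ifs with h
    · exact ha.size_pos i h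
    · exact hb.size_pos _ (by simp at hi; omega)
  · intro i hi
    rw [List.length_append] at hi ⊢
    rw [List.getElem_append]
    split_ifs with h
    · have := ha.add_size_le i h; omega
    · have := hb.add_size_le (i - a.length) (by omega); omega
  · intro i j hi hj hij hji
    rw [List.length_append] at hi hj
    by_cases h : i < a.length
    · have hj' : j < a.length := by
        have := ha.add_size_le i h; rw [List.getElem_append_left h] at hji; omega
      rw [List.getElem_append_left h] at hji ⊢
      rw [List.getElem_append_left hj']
      exact ha.nested i j h hj' hij hji
    · rw [List.getElem_append_right (by omega)] at hji ⊢
      rw [List.getElem_append_right (by omega)]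
      have := hb.nested (i - a.length) (j - a.length) (by omega) (by omega) (by omega)
        (by omega)
      omega
  · intro i hi
    rw [List.getElem_append]
    split_ifs with h
    · exact ha.size_eq_one i h
    · exact hb.size_eq_one _ (by simp at hi; omega)

theorem of_append {a b : List ((X ⊕ Ω) × ℕ)} (hab : IsForestCode (a ++ b))
    (hclosed : ∀ i (hi : i < a.length), i + a[i].2 ≤ a.length) :
    IsForestCode a ∧ IsForestCode b := by
  have hleft : ∀ i (hi : i < a.length), (a ++ b)[i]'(by simp; omega) = a[i] :=
    fun i hi => List.getElem_append_left hi
  have hright : ∀ i (hi : i < b.length),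
      (a ++ b)[a.length + i]'(by simp; omega) = b[i] :=
    fun i hi => by rw [List.getElem_append_right (by omega)]; simp
  refine ⟨⟨fun i hi => ?_, hclosed, fun i j hi hj hij hji => ?_, fun i hi => ?_⟩,
    ⟨fun i hi => ?_, fun i hi => ?_, fun i j hi hj hij hji => ?_, fun i hi => ?_⟩⟩
  · simpa [hleft i hi] using hab.size_pos i (by simp; omega)
  · simpa [hleft i hi, hleft j hj] using
      hab.nested i j (by simp; omega) (by simp; omega) hij (by rwa [hleft i hi])
  · simpa [hleft i hi] using hab.size_eq_one i (by simp; omega)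
  · simpa [hright i hi] using hab.size_pos (a.length + i) (by simp; omega)
  · have := hab.add_size_le (a.length + i) (by simp; omega)
    rw [hright i hi] at this; simp at this; omega
  · have := hab.nested (a.length + i) (a.length + j) (by simp; omega) (by simp; omega)
      (by omega) (by rw [hright i hi]; omega)
    rw [hright i hi, hright j hj] at this; omega
  · simpa [hright i hi] using hab.size_eq_one (a.length + i) (by simp; omega)

theorem cons_iff {d : X ⊕ Ω} {l : List ((X ⊕ Ω) × ℕ)} :
    IsForestCode ((d, l.length + 1) :: l) ↔ IsForestCode l ∧ (d.isLeft → l = []) := by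
  constructor
  · intro h
    have hlt : ∀ {i}, i < l.length → i + 1 < ((d, l.length + 1) :: l).length := by simp
    refine ⟨⟨fun i hi => ?_, fun i hi => ?_, fun i j hi hj hij hji => ?_, fun i hi => ?_⟩,
      fun hd => ?_⟩
    · simpa only [List.getElem_cons_succ] using h.size_pos (i + 1) (hlt hi)
    · have := h.add_size_le (i + 1) (hlt hi)
      simp only [List.getElem_cons_succ, List.length_cons] at this; omega
    · have := h.nested (i + 1) (j + 1) (hlt hi) (hlt hj) (by omega)
        (by simp only [List.getElem_cons_succ]; omega)
      simp only [List.getElem_cons_succ] at this; omega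
    · simpa only [List.getElem_cons_succ] using h.size_eq_one (i + 1) (hlt hi)
    · have := h.size_eq_one 0 (by simp) hd
      simpa only [List.getElem_cons_zero, Nat.add_eq_right, List.length_eq_zero_iff] using this
  · rintro ⟨h, hleaf⟩
    refine ⟨fun i hi => ?_, fun i hi => ?_, fun i j hi hj hij hji => ?_, fun i hi => ?_⟩
    · cases i with
      | zero => simp
      | succ i => simpa only [List.getElem_cons_succ] using h.size_pos i (by simpa using hi)
    · cases i with
      | zero => simp
      | succ i =>
        have := h.add_size_le i (by simpa using hi)
        simp only [List.getElem_cons_succ, List.length_cons]; omega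
    · cases j with
      | zero =>
        obtain rfl : i = 0 := by omega
        exact le_rfl
      | succ j =>
        have := h.add_size_le j (by simpa using hj)
        cases i with
        | zero => simp only [List.getElem_cons_succ, List.getElem_cons_zero]; omega
        | succ i =>
          simp only [List.getElem_cons_succ] at hji ⊢
          have := h.nested i j (by simpa using hi) (by simpa using hj) (by omega) (by omega)
          omega
    · cases i with
      | zero => intro hd; simp [hleaf hd]
      | succ i => simpa only [List.getElem_cons_succ] using h.size_eq_one i (by simpa using hi)

end IsForestCode

theorem isForestCode_preorderCode : ∀ l : List (PTree X Ω), IsForestCode (preorderCode l)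
  | [] => .nil
  | .leafX x :: ts => by
    rw [preorderCode_leafX_cons, ← List.singleton_append]
    exact .append (IsForestCode.cons_iff (l := []).2 ⟨.nil, fun _ => rfl⟩)
      (isForestCode_preorderCode ts)
  | .node ω us :: ts => by
    rw [preorderCode_node_cons, ← List.cons_append]
    exact .append (IsForestCode.cons_iff.2 ⟨isForestCode_preorderCode us, by simp⟩)
      (isForestCode_preorderCode ts)

theorem exists_preorderCode_eq {l : List ((X ⊕ Ω) × ℕ)} (hl : IsForestCode l) :
    ∃ ts : List (PTree X Ω), preorderCode ts = l := by
  induction hn : l.length using Nat.strong_induction_on generalizing l with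
  | _ n ih =>
  match l with
  | [] => exact ⟨[], preorderCode_nil⟩
  | (d, s) :: rest =>
    have hs0 := hl.size_pos 0 (by simp)
    have hsl := hl.add_size_le 0 (by simp)
    simp only [List.getElem_cons_zero, List.length_cons, zero_add] at hs0 hsl
    obtain ⟨a, b, rfl, rfl⟩ : ∃ a b, a.length + 1 = s ∧ a ++ b = rest :=
      ⟨rest.take (s - 1), rest.drop (s - 1), by simp; omega, List.take_append_drop _ _⟩
    rw [← List.cons_append] at hl ⊢
    have hclosed : ∀ i (hi : i < ((d, a.length + 1) :: a).length),
        i + ((d, a.length + 1) :: a)[i].2 ≤ ((d, a.length + 1) :: a).length := fun i hi => by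
      have := hl.nested 0 i (by simp) (by simp at hi ⊢; omega) (Nat.zero_le _)
        (by rw [List.getElem_append_left (by simp)]; simp at hi ⊢; omega)
      rw [List.getElem_append_left hi, List.getElem_append_left (by simp)] at this
      simpa using this
    obtain ⟨hda, hb⟩ := hl.of_append hclosed
    obtain ⟨ha, hleaf⟩ := IsForestCode.cons_iff.1 hda
    simp only [List.length_append, List.length_cons] at hn
    obtain ⟨us, rfl⟩ := ih a.length (by omega) ha rfl
    obtain ⟨ts, rfl⟩ := ih b.length (by omega) hb rfl
    cases d with
    | inl x => exact ⟨.leafX x :: ts, by simp [hleaf rfl]⟩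
    | inr ω => exact ⟨.node ω us :: ts, by simp⟩

theorem isForestCode_ofFn_iff {n : ℕ} {f : Fin n → (X ⊕ Ω) × ℕ} :
    IsForestCode (List.ofFn f) ↔ (∀ i, 0 < (f i).2) ∧ (∀ i, i + (f i).2 ≤ n) ∧
      (∀ i j : Fin n, i ≤ j → (j : ℕ) < i + (f i).2 → j + (f j).2 ≤ i + (f i).2) ∧
      (∀ i, (f i).1.isLeft → (f i).2 = 1) := by
  constructor
  · intro h
    refine ⟨fun i => ?_, fun i => ?_, fun i j hij hj => ?_, fun i => ?_⟩
    · simpa using h.size_pos i (by simp)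
    · simpa using h.add_size_le i (by simp)
    · simpa using h.nested i j (by simp) (by simp) hij (by simpa using hj)
    · simpa using h.size_eq_one i (by simp)
  · rintro ⟨hpos, hle, hnest, hone⟩
    refine ⟨fun i hi => ?_, fun i hi => ?_, fun i j hi hj hij hji => ?_, fun i hi => ?_⟩
    · simpa using hpos ⟨i, by simpa using hi⟩
    · simpa using hle ⟨i, by simpa using hi⟩
    · simpa using hnest ⟨i, by simpa using hi⟩ ⟨j, by simpa using hj⟩ hij (by simpa using hji)
    · simpa using hone ⟨i, by simpa using hi⟩

namespace FMat

variable (A : FMat X Ω)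

theorem exists_rel_eq_r (i : Fin A.n) :
    ∃ k, 0 < k ∧ ∀ hk : (i : ℕ) + k < A.n, A.rel i ⟨i + k, hk⟩ = .r :=
  ⟨A.n, i.pos, fun hk => by omega⟩

def subSize (i : Fin A.n) : ℕ := Nat.find (A.exists_rel_eq_r i)

def code : List ((X ⊕ Ω) × ℕ) := List.ofFn fun i => (A.dec i, A.subSize i)

variable {A}

theorem subSize_pos (i : Fin A.n) : 0 < A.subSize i := (Nat.find_spec (A.exists_rel_eq_r i)).1

theorem add_subSize_le (i : Fin A.n) : i + A.subSize i ≤ A.n := by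
  have := Nat.find_min' (A.exists_rel_eq_r i) (m := A.n - i) ⟨by omega, fun hk => by omega⟩
  exact (Nat.add_le_add_left this i).trans (by omega)

theorem subSize_eq {i : Fin A.n} {s : ℕ} (hs : 0 < s) (hle : i + s ≤ A.n)
    (hrel : ∀ j : Fin A.n, i < j → A.rel i j = if (j : ℕ) < i + s then .h else .r) :
    A.subSize i = s := by
  rw [subSize, Nat.find_eq_iff]
  refine ⟨⟨hs, fun hk => by rw [hrel _ (by simp [Fin.lt_def]; omega)]; simp⟩, ?_⟩
  rintro k hks ⟨hk0, hr⟩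
  have := hr (by omega)
  rw [hrel _ (by simp [Fin.lt_def]; omega), if_pos (by simp; omega)] at this
  exact MEntry.noConfusion this

theorem rel_eq_h (hA : IsFR A) {i j : Fin A.n} (hij : i < j) (hj : (j : ℕ) < i + A.subSize i) :
    A.rel i j = .h := by
  have hmin := Nat.find_min (A.exists_rel_eq_r i) (m := j - i) (by rw [← subSize]; omega)
  simp only [not_and, not_forall] at hmin
  obtain ⟨hk, hne⟩ := hmin (by rw [Fin.lt_def] at hij; omega)
  have hji : (⟨i + (j - i), hk⟩ : Fin A.n) = j := by ext; simp; omega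
  rw [hji] at hne
  exact (hA.2.2.1 i j hij).resolve_right hne

theorem rel_eq_r (hA : IsFR A) {i j : Fin A.n} (hij : i < j) (hj : i + A.subSize i ≤ (j : ℕ)) :
    A.rel i j = .r := by
  have hm : (i : ℕ) + A.subSize i < A.n := by omega
  set m : Fin A.n := ⟨i + A.subSize i, hm⟩
  have him : A.rel i m = .r := (Nat.find_spec (A.exists_rel_eq_r i)).2 hm
  rcases hj.eq_or_lt with hjm | hjm
  · rwa [show j = m from Fin.ext hjm.symm]
  · refine (hA.2.2.1 i j hij).resolve_left fun hh => ?_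
    -- the triple `(i, m, j)` would have the forbidden pattern `(r, h, ·)`
    have := hA.2.2.2.2 i m j (by simp [m, Fin.lt_def, subSize_pos]) hjm
    simp [him, hh] at this

theorem rel_of_lt (hA : IsFR A) {i j : Fin A.n} (hij : i < j) :
    A.rel i j = if (j : ℕ) < i + A.subSize i then .h else .r := by
  split_ifs with h
  · exact rel_eq_h hA hij h
  · exact rel_eq_r hA hij (not_lt.1 h)

theorem subSize_eq_one (hA : IsFR A) {i : Fin A.n} (hi : (A.dec i).isLeft) :
    A.subSize i = 1 :=
  le_antisymm (Nat.find_min' _ ⟨one_pos, fun hk => hA.2.2.2.1 i _ (by simp [Fin.lt_def]) hi⟩)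
    (subSize_pos i)

theorem subSize_nested (hA : IsFR A) {i j : Fin A.n} (hij : i ≤ j)
    (hj : (j : ℕ) < i + A.subSize i) : j + A.subSize j ≤ i + A.subSize i := by
  rcases hij.eq_or_lt with rfl | hij
  · exact le_rfl
  by_contra! hlt
  have hm : (i : ℕ) + A.subSize i < A.n := by have := add_subSize_le j; omega
  set m : Fin A.n := ⟨i + A.subSize i, hm⟩
  -- the triple `(i, j, m)` would have the forbidden pattern `(h, r, h)`
  have := hA.2.2.2.2 i j m hij (by simp [m, Fin.lt_def]; omega)
  rw [rel_eq_h hA hij hj, rel_eq_r hA (hij.trans (by simp [m, Fin.lt_def]; omega)) le_rfl,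
    rel_eq_h hA (by simp [m, Fin.lt_def]; omega) (by simpa [m] using hlt)] at this
  simp at this

theorem isForestCode_code (hA : IsFR A) : IsForestCode A.code :=
  isForestCode_ofFn_iff.2 ⟨subSize_pos, add_subSize_le, fun _ _ => subSize_nested hA,
    fun _ => subSize_eq_one hA⟩

theorem eq_of_code_eq {B : FMat X Ω} (hA : IsFR A) (hB : IsFR B) (h : A.code = B.code) :
    A = B := by
  obtain ⟨n, dec, rel⟩ := A
  obtain ⟨n', dec', rel'⟩ := B
  obtain rfl : n = n' := by simpa [code] using congrArg List.length h
  have hcode := congrFun (List.ofFn_injective h)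
  simp only [Prod.mk.injEq] at hcode
  congr
  · exact funext fun i => (hcode i).1
  · funext i j
    rcases lt_trichotomy i j with hij | rfl | hij
    · have hAij := rel_of_lt hA hij
      have hBij := rel_of_lt hB hij
      dsimp only at hAij hBij
      rw [hAij, hBij, (hcode i).2]
    · exact (hA.2.1 i).trans (hB.2.1 i).symm
    · exact (hA.1 i j hij).trans (hB.1 i j hij).symm

end FMat

theorem preorderCode_eq_ofFn (F : RForest X Ω) :
    preorderCode (FreeMonoid.toList F) = List.ofFn fun i => (decorV F i, subSize F i) :=
  (List.ofFn_getElem_eq_map _ _).symm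

theorem isForestCode_ofFn_decorV_subSize (F : RForest X Ω) :
    IsForestCode (List.ofFn fun i => (decorV F i, subSize F i)) :=
  preorderCode_eq_ofFn F ▸ isForestCode_preorderCode _

theorem Mmat_rel_of_lt (F : RForest X Ω) {i j : Fin (numV F)} (hij : i < j) :
    (Mmat F).rel i j = if (j : ℕ) < i + subSize F i then .h else .r := by
  simp [Mmat, hij, leh, hij.le]

theorem isFR_Mmat (F : RForest X Ω) : IsFR (Mmat F) := by
  obtain ⟨-, -, hnest, hone⟩ := isForestCode_ofFn_iff.1 (isForestCode_ofFn_decorV_subSize F)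
  dsimp only at hnest hone
  refine ⟨fun (i j : Fin (numV F)) hji => ?_, fun (i : Fin (numV F)) => ?_,
    fun (i j : Fin (numV F)) hij => ?_, fun (i j : Fin (numV F)) hij hi => ?_,
    fun (i j k : Fin (numV F)) hij hjk => ?_⟩
  · exact (if_neg hji.not_gt).trans (if_neg hji.ne')
  · exact (if_neg (lt_irrefl i)).trans (if_pos rfl)
  · rw [Mmat_rel_of_lt F hij]; split_ifs <;> simp
  · rw [Mmat_rel_of_lt F hij, hone i hi, if_neg (by have : (i : ℕ) < j := hij; omega)]
  · rw [Mmat_rel_of_lt F hij, Mmat_rel_of_lt F (hij.trans hjk), Mmat_rel_of_lt F hjk]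
    have := hnest i j hij.le
    have : (i : ℕ) < j := hij
    have : (j : ℕ) < k := hjk
    split_ifs <;> simp <;> omega

theorem subSize_Mmat (F : RForest X Ω) (i : Fin (numV F)) :
    (Mmat F).subSize i = subSize F i := by
  obtain ⟨hpos, hle, -, -⟩ := isForestCode_ofFn_iff.1 (isForestCode_ofFn_decorV_subSize F)
  exact FMat.subSize_eq (hpos i) (hle i) fun j hij => Mmat_rel_of_lt F hij

theorem code_Mmat (F : RForest X Ω) : (Mmat F).code = preorderCode (FreeMonoid.toList F) := by
  rw [preorderCode_eq_ofFn, FMat.code]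
  exact congrArg List.ofFn (funext fun i => Prod.ext rfl (subSize_Mmat F i))

/-- The map `F ↦ M(F)` is a bijection from the set `ℱ(X,Ω)` of decorated planar rooted
forests onto the set `FM(X,Ω)` of forest-representable matrices. -/
theorem Mmat_bijective [Nonempty Ω] :
    Set.BijOn (Mmat (X := X) (Ω := Ω)) Set.univ {A | IsFR A} := by
  refine ⟨fun F _ => isFR_Mmat F, fun F _ G _ h => ?_, fun A hA => ?_⟩
  · apply FreeMonoid.toList.injective
    apply preorderCode_injective
    rw [← code_Mmat, ← code_Mmat, h]
  · obtain ⟨ts, hts⟩ := exists_preorderCode_eq (FMat.isForestCode_code hA)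
    refine ⟨FreeMonoid.ofList ts, trivial, FMat.eq_of_code_eq (isFR_Mmat _) hA ?_⟩
    rw [code_Mmat, FreeMonoid.toList_ofList, hts]

end Moerdijk
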